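/- In the hyperreal numbers, if ω is an infinite positive hyperreal, then 1 < ω^(1/ω) < 2. -/

import Mathlib

open Filter

/-- The hyperreal extension of the real exponential function. -/
noncomputable def Hyperreal.exp : Hyperreal → Hyperreal := Germ.map Real.exp

/-- The hyperreal extension of the real logarithm. -/
noncomputable def Hyperreal.log : Hyperreal → Hyperreal := Germ.map Real.log

/-!
For real `x > 1` we have `0 < log x / x < 1/2 < log 2`, so `1 < x^(1/x) < 2`. The hyperreal
`exp (log ω / ω)` is the germ of `x ↦ x^(1/x)` applied to `ω`, and a strict inequality with a
constant that holds pointwise on `(1, ∞)` transfers to every element of an ultrapower above `1`.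
-/

namespace Real

theorem log_div_self_lt_half {x : ℝ} (hx : 0 < x) : log x / x < 1 / 2 := by
  have h := log_le_sub_one_of_pos (half_pos hx)
  rw [log_div hx.ne' two_ne_zero] at h
  rw [div_lt_div_iff₀ hx two_pos]
  linarith [log_two_lt_d9]

theorem exp_log_div_self_lt_two {x : ℝ} (hx : 0 < x) : exp (log x / x) < 2 := by
  rw [← lt_log_iff_exp_lt two_pos]
  linarith [log_div_self_lt_half hx, log_two_gt_d9]

theorem one_lt_exp_log_div_self {x : ℝ} (hx : 1 < x) : 1 < exp (log x / x) :=
  one_lt_exp_iff.2 (div_pos (log_pos hx) (zero_lt_one.trans hx))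

end Real

namespace Filter.Germ

variable {α β γ : Type*} {φ : Ultrafilter α} [Preorder β] [Preorder γ] {f : β → γ} {c : β}

theorem const_lt_map {a : γ} (h : ∀ x, c < x → a < f x) {y : Germ (φ : Filter α) β}
    (hy : (c : Germ (φ : Filter α) β) < y) : (a : Germ (φ : Filter α) γ) < y.map f := by
  induction y using Germ.inductionOn with
  | h g => exact coe_lt.2 ((coe_lt.1 hy).mono fun _ hi ↦ h _ hi)

theorem map_lt_const {b : γ} (h : ∀ x, c < x → f x < b) {y : Germ (φ : Filter α) β}
    (hy : (c : Germ (φ : Filter α) β) < y) : y.map f < (b : Germ (φ : Filter α) γ) := by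
  induction y using Germ.inductionOn with
  | h g => exact coe_lt.2 ((coe_lt.1 hy).mono fun _ hi ↦ h _ hi)

end Filter.Germ

theorem Hyperreal.exp_log_div_self (x : ℝ*) :
    Hyperreal.exp (Hyperreal.log x / x) = x.map fun t ↦ Real.exp (Real.log t / t) := by
  induction x using Germ.inductionOn with
  | h f => rfl

theorem grossone_pow_inv_grossone_finite (ω : Hyperreal)
    (hω : ∀ n : ℕ, (n : Hyperreal) < ω) :
    1 < Hyperreal.exp (Hyperreal.log ω / ω) ∧
      Hyperreal.exp (Hyperreal.log ω / ω) < 2 := by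
  have one_lt : ((1 : ℝ) : ℝ*) < ω := by exact_mod_cast hω 1
  rw [Hyperreal.exp_log_div_self]
  exact ⟨Germ.const_lt_map (fun _ ↦ Real.one_lt_exp_log_div_self) one_lt,
    Germ.map_lt_const (fun _ hx ↦ Real.exp_log_div_self_lt_two (zero_lt_one.trans hx)) one_lt⟩
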